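/- Let the symmetric group Sₙ act on ℝ[x₁,…,xₙ] by permuting variables, and let R = ℝ[x₁,…,xₙ]/J be the coinvariant ring, where J is generated by symmetric polynomials without constant term. If ℓ = a₁x₁ + ⋯ + aₙxₙ ∈ R₁ is a strong Lefschetz element of R, then the coefficients are pairwise distinct: aᵢ ≠ aⱼ for all i ≠ j. -/

import Mathlib

open MvPolynomial

/-- The ideal of `ℝ[x₁,…,xₙ]` generated by the symmetric polynomials with zero constant
term. -/
noncomputable def symCoinvIdeal (n : ℕ) : Ideal (MvPolynomial (Fin n) ℝ) :=
  Ideal.span {f | f.IsSymmetric ∧ constantCoeff f = 0}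

/-- The degree-`d` homogeneous component of the coinvariant ring of `Sₙ`. -/
noncomputable def symCoinvComponent (n d : ℕ) :
    Submodule ℝ (MvPolynomial (Fin n) ℝ ⧸ symCoinvIdeal n) :=
  Submodule.map (Ideal.Quotient.mkₐ ℝ (symCoinvIdeal n)).toLinearMap
    (homogeneousSubmodule (Fin n) ℝ d)

namespace LefAux

variable {n : ℕ}

/-- sign of a permutation as a real number -/
noncomputable def eps (σ : Equiv.Perm (Fin n)) : ℝ := ((Equiv.Perm.sign σ : ℤ) : ℝ)

lemma eps_mul_self (σ : Equiv.Perm (Fin n)) : eps σ * eps σ = 1 := by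
  simp only [eps, ← Int.cast_mul, ← Units.val_mul, Int.units_mul_self, Units.val_one,
    Int.cast_one]

lemma eps_mul (σ τ : Equiv.Perm (Fin n)) : eps (σ * τ) = eps σ * eps τ := by
  simp only [eps, map_mul, Units.val_mul, Int.cast_mul]

lemma eps_one : eps (1 : Equiv.Perm (Fin n)) = 1 := by simp [eps]

/-- antisymmetrization operator -/
noncomputable def altOp (n : ℕ) :
    MvPolynomial (Fin n) ℝ →ₗ[ℝ] MvPolynomial (Fin n) ℝ :=
  ∑ σ : Equiv.Perm (Fin n), eps σ • (rename (R := ℝ) (⇑σ)).toLinearMap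

lemma altOp_apply (p : MvPolynomial (Fin n) ℝ) :
    altOp n p = ∑ σ : Equiv.Perm (Fin n), eps σ • rename (⇑σ) p := by
  simp [altOp, LinearMap.sum_apply]

lemma rename_altOp (τ : Equiv.Perm (Fin n)) (p : MvPolynomial (Fin n) ℝ) :
    rename (⇑τ) (altOp n p) = eps τ • altOp n p := by
  rw [altOp_apply, map_sum, Finset.smul_sum]
  refine Fintype.sum_equiv (Equiv.mulLeft τ) _ _ fun σ => ?_
  rw [map_smul, rename_rename]
  have h1 : ⇑τ ∘ ⇑σ = ⇑(τ * σ) := by ext x; simp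
  have h2 : eps τ * eps (τ * σ) = eps σ := by
    rw [eps_mul, ← mul_assoc, eps_mul_self, one_mul]
  rw [h1]
  simp only [Equiv.coe_mulLeft]
  rw [smul_smul, h2]

lemma altOp_mul_symm (p f : MvPolynomial (Fin n) ℝ) (hf : f.IsSymmetric) :
    altOp n (p * f) = altOp n p * f := by
  rw [altOp_apply, altOp_apply, Finset.sum_mul]
  refine Finset.sum_congr rfl fun σ _ => ?_
  rw [map_mul, hf σ, smul_mul_assoc]

lemma coeff_altOp_eq_zero (p : MvPolynomial (Fin n) ℝ) (α : Fin n →₀ ℕ) {i j : Fin n}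
    (hij : i ≠ j) (hα : α i = α j) : coeff α (altOp n p) = 0 := by
  set τ : Equiv.Perm (Fin n) := Equiv.swap i j with hτ
  have h1 : rename (⇑τ) (altOp n p) = -(altOp n p) := by
    rw [rename_altOp]
    have : eps τ = -1 := by
      simp [eps, hτ, Equiv.Perm.sign_swap hij]
    rw [this]; simp
  have h2 : Finsupp.mapDomain (⇑τ) α = α := by
    ext k
    rw [Finsupp.mapDomain_equiv_apply]
    have : α (τ.symm k) = α k := by
      rcases eq_or_ne k i with rfl | hki
      · rw [hτ, Equiv.symm_swap, Equiv.swap_apply_left]; exact hα.symm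
      rcases eq_or_ne k j with rfl | hkj
      · rw [hτ, Equiv.symm_swap, Equiv.swap_apply_right]; exact hα
      · rw [hτ, Equiv.symm_swap, Equiv.swap_apply_of_ne_of_ne hki hkj]
    exact this
  have h3 := coeff_rename_mapDomain (⇑τ) τ.injective (altOp n p) α
  rw [h2, h1] at h3
  simp only [coeff_neg] at h3
  linarith

/-- the staircase exponent -/
noncomputable def dstar (n : ℕ) : Fin n →₀ ℕ :=
  Finsupp.equivFunOnFinite.symm fun i => (i : ℕ)

lemma dstar_apply (i : Fin n) : dstar n i = (i : ℕ) := by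
  simp [dstar]

/-- the Vandermonde polynomial -/
noncomputable def vand (n : ℕ) : MvPolynomial (Fin n) ℝ :=
  altOp n (monomial (dstar n) 1)

lemma degree_eq_sum_univ (d : Fin n →₀ ℕ) : d.degree = ∑ i, d i := by
  rw [Finsupp.degree]
  exact Finset.sum_subset (Finset.subset_univ _) fun i _ hi =>
    Finsupp.notMem_support_iff.mp hi

lemma vand_isHomogeneous :
    vand n ∈ homogeneousSubmodule (Fin n) ℝ (∑ i : Fin n, (i : ℕ)) := by
  rw [vand, altOp_apply]
  refine Submodule.sum_mem _ fun σ _ => Submodule.smul_mem _ _ ?_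
  rw [rename_monomial, mem_homogeneousSubmodule]
  refine isHomogeneous_monomial _ ?_
  rw [degree_eq_sum_univ]
  have : ∀ k : Fin n, (Finsupp.mapDomain (⇑σ) (dstar n)) k = dstar n (σ.symm k) :=
    fun k => Finsupp.mapDomain_equiv_apply _ _
  calc ∑ k, (Finsupp.mapDomain (⇑σ) (dstar n)) k
      = ∑ k, dstar n (σ.symm k) := Finset.sum_congr rfl fun k _ => this k
    _ = ∑ k, dstar n k := Equiv.sum_comp σ.symm fun k => dstar n k
    _ = ∑ k : Fin n, (k : ℕ) := Finset.sum_congr rfl fun k _ => dstar_apply k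

lemma coeff_dstar_vand : coeff (dstar n) (vand n) = 1 := by
  rw [vand, altOp_apply]
  rw [coeff_sum]
  rw [Finset.sum_eq_single (1 : Equiv.Perm (Fin n))]
  · rw [coeff_smul, rename_monomial]
    have : Finsupp.mapDomain (⇑(1 : Equiv.Perm (Fin n))) (dstar n) = dstar n := by
      simp [Finsupp.mapDomain_id]
    rw [this, coeff_monomial, if_pos rfl, eps_one]
    simp
  · intro σ _ hσ
    rw [coeff_smul, rename_monomial, coeff_monomial, if_neg, smul_zero]
    intro hmap
    apply hσ
    ext k
    have h1 : (Finsupp.mapDomain (⇑σ) (dstar n)) (σ k) = dstar n k :=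
      Finsupp.mapDomain_apply σ.injective _ _
    rw [hmap] at h1
    have : (σ k : ℕ) = (k : ℕ) := by
      rw [dstar_apply, dstar_apply] at h1; exact h1
    simpa using this
  · simp

lemma sum_range_le_sum_finset : ∀ (k : ℕ) (s : Finset ℕ), s.card = k →
    ∑ i ∈ Finset.range k, i ≤ ∑ x ∈ s, x := by
  intro k
  induction k with
  | zero => intro s _; simp
  | succ k ih =>
    intro s hs
    have hne : s.Nonempty := Finset.card_pos.mp (by omega)
    set M := s.max' hne with hM
    have hMmem : M ∈ s := s.max'_mem hne
    have hkM : k ≤ M := by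
      have hsub : s ⊆ Finset.Iic M := fun x hx => Finset.mem_Iic.mpr (s.le_max' x hx)
      have := Finset.card_le_card hsub
      rw [Nat.card_Iic] at this
      omega
    have herase : (s.erase M).card = k := by
      rw [Finset.card_erase_of_mem hMmem, hs]
      omega
    have := ih (s.erase M) herase
    rw [Finset.sum_range_succ, ← Finset.sum_erase_add s _ hMmem]
    omega

lemma sum_le_of_injective {α : Fin n → ℕ} (hα : Function.Injective α) :
    ∑ i : Fin n, (i : ℕ) ≤ ∑ i, α i := by
  have h1 : (Finset.univ.image α).card = n := by
    rw [Finset.card_image_of_injective _ hα, Finset.card_univ, Fintype.card_fin]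
  have h2 := sum_range_le_sum_finset n (Finset.univ.image α) h1
  rw [Finset.sum_image (fun x _ y _ h => hα h)] at h2
  rw [Fin.sum_univ_eq_sum_range fun i => (i : ℕ)]
  exact h2

lemma rename_mem_symCoinvIdealAux (S : Set (MvPolynomial (Fin n) ℝ))
    (hS : S = {f | f.IsSymmetric ∧ constantCoeff f = 0})
    (τ : Equiv.Perm (Fin n)) {p : MvPolynomial (Fin n) ℝ} (hp : p ∈ Ideal.span S) :
    rename (⇑τ) p ∈ Ideal.span S := by
  refine Submodule.span_induction (fun f hf => ?_) (by simp) (fun x y _ _ hx hy => ?_)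
    (fun r x _ hx => ?_) hp
  · have : rename (⇑τ) f = f := by
      subst hS; exact hf.1 τ
    rw [this]; exact Ideal.subset_span hf
  · rw [map_add]; exact Ideal.add_mem _ hx hy
  · rw [smul_eq_mul, map_mul]; exact Ideal.mul_mem_left _ _ hx

lemma coeff_altOp_sum_le (p : MvPolynomial (Fin n) ℝ) (β : Fin n →₀ ℕ)
    (hb : coeff β (altOp n p) ≠ 0) : ∑ i : Fin n, (i : ℕ) ≤ ∑ i, β i := by
  refine sum_le_of_injective fun i j hij => ?_
  by_contra hne
  exact hb (coeff_altOp_eq_zero p β hne hij)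

lemma vand_not_mem :
    vand n ∉ Ideal.span {f : MvPolynomial (Fin n) ℝ | f.IsSymmetric ∧ constantCoeff f = 0} := by
  intro h
  have h' : vand n ∈ Submodule.span (MvPolynomial (Fin n) ℝ)
      {f : MvPolynomial (Fin n) ℝ | f.IsSymmetric ∧ constantCoeff f = 0} := h
  obtain ⟨c, hsupp, hsum⟩ := Submodule.mem_span_set.mp h'
  have hA : altOp n (vand n) = ∑ f ∈ c.support, altOp n (c f) * f := by
    rw [← hsum, Finsupp.sum, map_sum]
    refine Finset.sum_congr rfl fun f hf => ?_
    rw [smul_eq_mul, altOp_mul_symm _ _ (hsupp hf).1]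
  have hL : altOp n (vand n) = (Fintype.card (Equiv.Perm (Fin n)) : ℕ) • vand n := by
    rw [vand, altOp_apply]
    have : ∀ σ : Equiv.Perm (Fin n),
        eps σ • rename (⇑σ) (altOp n (monomial (dstar n) 1)) = vand n := by
      intro σ
      rw [rename_altOp, smul_smul, eps_mul_self, one_smul, vand]
    rw [Finset.sum_congr rfl fun σ _ => this σ, Finset.sum_const, Finset.card_univ, vand]
  have hcoeffL : coeff (dstar n) (altOp n (vand n))
      = (Fintype.card (Equiv.Perm (Fin n)) : ℝ) := by
    rw [hL, coeff_smul, coeff_dstar_vand]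
    simp
  have hcoeffR : coeff (dstar n) (∑ f ∈ c.support, altOp n (c f) * f) = 0 := by
    rw [coeff_sum]
    refine Finset.sum_eq_zero fun f hf => ?_
    rw [coeff_mul]
    refine Finset.sum_eq_zero ?_
    rintro ⟨β, γ⟩ hbg
    replace hbg : β + γ = dstar n := Finset.HasAntidiagonal.mem_antidiagonal.mp hbg
    by_cases hb : coeff β (altOp n (c f)) = 0
    · rw [hb, zero_mul]
    · have h1 := coeff_altOp_sum_le (c f) β hb
      have hsplit : ∑ i, β i + ∑ i, γ i = ∑ i : Fin n, (i : ℕ) := by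
        rw [← Finset.sum_add_distrib]
        refine Finset.sum_congr rfl fun i _ => ?_
        rw [← Finsupp.add_apply, hbg, dstar_apply]
      have hγ0 : ∑ i, γ i = 0 := by omega
      have hγ : γ = 0 := by
        ext i
        have := (Finset.sum_eq_zero_iff.mp hγ0) i (Finset.mem_univ i)
        simpa using this
      have : coeff γ f = 0 := by
        rw [hγ]
        have h2 := (hsupp hf).2
        rwa [constantCoeff_eq] at h2
      rw [this, mul_zero]
  rw [hA, hcoeffR] at hcoeffL
  have : Fintype.card (Equiv.Perm (Fin n)) ≠ 0 := Fintype.card_ne_zero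
  exact this (by exact_mod_cast hcoeffL.symm)

end LefAux


/-- If `ℓ = a₁x₁ + ⋯ + aₙxₙ` is a strong Lefschetz element of the coinvariant ring of the
symmetric group `Sₙ`, then the coefficients `aᵢ` are pairwise distinct. -/
theorem lefschetz_coefficients_distinct (n : ℕ) (a : Fin n → ℝ)
    (m : ℕ) (hm : m = n * (n - 1) / 2)
    (ℓ : MvPolynomial (Fin n) ℝ ⧸ symCoinvIdeal n)
    (hℓ : ℓ = Ideal.Quotient.mk (symCoinvIdeal n) (∑ i, C (a i) * X i))
    (hSL : ∀ i : ℕ, i ≤ m / 2 →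
      (∀ x ∈ symCoinvComponent n i, ∀ y ∈ symCoinvComponent n i,
        ℓ ^ (m - 2 * i) * x = ℓ ^ (m - 2 * i) * y → x = y) ∧
      (∀ z ∈ symCoinvComponent n (m - i), ∃ x ∈ symCoinvComponent n i,
        ℓ ^ (m - 2 * i) * x = z)) :
    ∀ i j : Fin n, i ≠ j → a i ≠ a j := by
  intro i j hij heq
  set τ : Equiv.Perm (Fin n) := Equiv.swap i j with hτ
  set L : MvPolynomial (Fin n) ℝ := ∑ k, C (a k) * X k with hLdef
  have hmM : m = ∑ k : Fin n, (k : ℕ) := by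
    have h1 : ∑ k : Fin n, (k : ℕ) = n * (n - 1) / 2 := by
      rw [Fin.sum_univ_eq_sum_range (fun k => k) n, Finset.sum_range_id]
    rw [hm, ← h1]
  have hzmem : Ideal.Quotient.mk (symCoinvIdeal n) (LefAux.vand n)
      ∈ symCoinvComponent n (m - 0) := by
    refine ⟨LefAux.vand n, ?_, rfl⟩
    rw [Nat.sub_zero, hmM]
    exact LefAux.vand_isHomogeneous
  obtain ⟨x, hxmem, hxeq⟩ := (hSL 0 (Nat.zero_le _)).2 _ hzmem
  obtain ⟨p, hp, rfl⟩ := hxmem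
  -- `p` is a constant
  have hpC : p = C (constantCoeff p) := by
    rw [constantCoeff_eq]
    ext d
    rcases eq_or_ne d 0 with rfl | hd
    · simp
    · have h0 : coeff d p = 0 := by
        by_contra hc
        have h1 : Finsupp.degree d = 0 := by
          rw [Finsupp.degree_eq_weight_one]
          exact (mem_homogeneousSubmodule _ _).mp hp hc
        exact hd ((Finsupp.degree_eq_zero_iff d).mp h1)
      rw [h0, coeff_C, if_neg (fun hc => hd hc.symm)]
  simp only [mul_zero, Nat.sub_zero, AlgHom.toLinearMap_apply,
    Ideal.Quotient.mkₐ_eq_mk, hℓ] at hxeq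
  have hmk : Ideal.Quotient.mk (symCoinvIdeal n) (L ^ m * p)
      = Ideal.Quotient.mk (symCoinvIdeal n) (LefAux.vand n) := by
    rw [map_mul, map_pow]
    exact hxeq
  have hmem1 : L ^ m * p - LefAux.vand n ∈ symCoinvIdeal n := Ideal.Quotient.eq.mp hmk
  have hmem2 : rename (⇑τ) (L ^ m * p - LefAux.vand n) ∈ symCoinvIdeal n :=
    LefAux.rename_mem_symCoinvIdealAux _ rfl τ hmem1
  have hrL : rename (⇑τ) L = L := by
    have haτ : ∀ k, a (τ k) = a k := by
      intro k
      rcases eq_or_ne k i with rfl | hki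
      · rw [hτ, Equiv.swap_apply_left]; exact heq.symm
      rcases eq_or_ne k j with rfl | hkj
      · rw [hτ, Equiv.swap_apply_right]; exact heq
      · rw [hτ, Equiv.swap_apply_of_ne_of_ne hki hkj]
    rw [hLdef, map_sum]
    calc ∑ k, rename (⇑τ) (C (a k) * X k)
        = ∑ k, C (a k) * X (τ k) := by simp
      _ = ∑ k, C (a (τ k)) * X (τ k) :=
          Finset.sum_congr rfl fun k _ => by rw [haτ k]
      _ = ∑ k, C (a k) * X k := Equiv.sum_comp τ fun k => C (a k) * X k
  have hrp : rename (⇑τ) p = p := by rw [hpC, rename_C]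
  have hrV : rename (⇑τ) (LefAux.vand n) = -LefAux.vand n := by
    rw [LefAux.vand, LefAux.rename_altOp]
    have : LefAux.eps τ = -1 := by
      simp [LefAux.eps, hτ, Equiv.Perm.sign_swap hij]
    rw [this, ← LefAux.vand]
    simp
  have hcalc : rename (⇑τ) (L ^ m * p - LefAux.vand n)
      = L ^ m * p + LefAux.vand n := by
    rw [map_sub, map_mul, map_pow, hrL, hrp, hrV, sub_neg_eq_add]
  rw [hcalc] at hmem2
  have h2V : LefAux.vand n + LefAux.vand n ∈ symCoinvIdeal n := by
    have h3 := Ideal.sub_mem _ hmem2 hmem1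
    have h4 : (L ^ m * p + LefAux.vand n) - (L ^ m * p - LefAux.vand n)
        = LefAux.vand n + LefAux.vand n := by ring
    rwa [h4] at h3
  have hV : LefAux.vand n ∈ symCoinvIdeal n := by
    have h5 : C (2⁻¹ : ℝ) * (LefAux.vand n + LefAux.vand n) = LefAux.vand n := by
      rw [mul_add, ← add_mul, ← C_add]
      norm_num
    exact h5 ▸ Ideal.mul_mem_left _ _ h2V
  exact LefAux.vand_not_mem hV
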